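/- Let d ≥ 1 be a natural number and let a : ℕ → ℝ be coefficients with a_i ≥ 0 for all i ≤ d and a_d > 0; let P(x) := Σ_{i=0}^{d} a_i x^i. Let n and r be real numbers with n ≥ 1 and r ≥ 1, and let ρ_G > 0 and ρ_DD > 0 be real numbers. Define the scale-up factor Sc := (ρ_G · P(r·n)) / (ρ_DD · r · P(n)) and α := (P(r·n) · n^d) / (P(n) · (r·n)^d). Then P(n) > 0, Sc = (ρ_G/ρ_DD) · α · r^{d−1}, and 0 < α ≤ 1; in particular Sc ≥ (ρ_G/ρ_DD) · α · r^{d−1}. -/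

import Mathlib

/-
Write `P(x) = ∑ a_i x^i`. Then `α · r^(d-1) = P(rn) / (r · P(n))`, so the formula for the scale-up
factor is pure algebra, and `α ≤ 1` is the termwise bound `a_i (rn)^i ≤ a_i r^d n^i` for `r ≥ 1`,
i.e. `P(rn) ≤ r^d P(n)`.
-/

open Finset

theorem sum_mul_pow_pos {d : ℕ} {a : ℕ → ℝ} (ha : ∀ i ≤ d, 0 ≤ a i) (had : 0 < a d)
    {x : ℝ} (hx : 0 < x) : 0 < ∑ i ∈ range (d + 1), a i * x ^ i :=
  sum_pos' (fun i hi => mul_nonneg (ha i (Nat.lt_succ_iff.mp (mem_range.mp hi))) (by positivity))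
    ⟨d, self_mem_range_succ d, mul_pos had (pow_pos hx d)⟩

theorem sum_mul_pow_mul_le {d : ℕ} {a : ℕ → ℝ} (ha : ∀ i ≤ d, 0 ≤ a i) {r x : ℝ}
    (hr : 1 ≤ r) (hx : 0 ≤ x) :
    ∑ i ∈ range (d + 1), a i * (r * x) ^ i ≤ r ^ d * ∑ i ∈ range (d + 1), a i * x ^ i := by
  rw [mul_sum]
  refine sum_le_sum fun i hi => ?_
  have hid : i ≤ d := Nat.lt_succ_iff.mp (mem_range.mp hi)
  calc a i * (r * x) ^ i = r ^ i * (a i * x ^ i) := by ring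
    _ ≤ r ^ d * (a i * x ^ i) :=
      mul_le_mul_of_nonneg_right (pow_le_pow_right₀ hr hid)
        (mul_nonneg (ha i hid) (pow_nonneg hx i))

theorem div_mul_pow_pred_eq {d : ℕ} (hd : 1 ≤ d) {r n : ℝ} (hr : r ≠ 0) (hn : n ≠ 0) (A B : ℝ) :
    A * n ^ d / (B * (r * n) ^ d) * r ^ (d - 1) = A / (r * B) := by
  obtain ⟨k, rfl⟩ := Nat.exists_eq_add_of_le' hd
  rw [Nat.add_sub_cancel, mul_pow]
  field_simp
  ring

theorem stmt3_general (d : ℕ) (hd : 1 ≤ d) (a : ℕ → ℝ) (ha : ∀ i ≤ d, 0 ≤ a i) (had : 0 < a d)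
    (n r : ℝ) (hn : 1 ≤ n) (hr : 1 ≤ r)
    (ρG ρDD : ℝ) :
    let P : ℝ → ℝ := fun x => ∑ i ∈ Finset.range (d + 1), a i * x ^ i
    let Sc : ℝ := ρG * P (r * n) / (ρDD * r * P n)
    let α : ℝ := P (r * n) * n ^ d / (P n * (r * n) ^ d)
    0 < P n ∧ Sc = (ρG / ρDD) * α * r ^ (d - 1) ∧ (0 < α ∧ α ≤ 1) ∧
      (ρG / ρDD) * α * r ^ (d - 1) ≤ Sc := by
  intro P Sc α
  have hn0 : 0 < n := one_pos.trans_le hn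
  have hr0 : 0 < r := one_pos.trans_le hr
  have hPn : 0 < P n := sum_mul_pow_pos ha had hn0
  have hPrn : 0 < P (r * n) := sum_mul_pow_pos ha had (mul_pos hr0 hn0)
  have hden : 0 < P n * (r * n) ^ d := by positivity
  have hα_le : α ≤ 1 := by
    rw [div_le_one hden]
    calc P (r * n) * n ^ d ≤ r ^ d * P n * n ^ d := by
          gcongr; exact sum_mul_pow_mul_le ha hr hn0.le
      _ = P n * (r * n) ^ d := by ring
  have hSc : Sc = ρG / ρDD * α * r ^ (d - 1) := by
    rw [mul_assoc, div_mul_pow_pred_eq hd hr0.ne' hn0.ne', div_mul_div_comm, ← mul_assoc]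
  exact ⟨hPn, hSc, ⟨by positivity, hα_le⟩, hSc.ge⟩

/-- The DD-4D-Var scale-up factor: `Sc = (ρ_G/ρ_DD) · α · r^(d-1)` with `0 < α ≤ 1`. -/
theorem stmt3 (d : ℕ) (hd : 1 ≤ d) (a : ℕ → ℝ) (ha : ∀ i ≤ d, 0 ≤ a i) (had : 0 < a d)
    (n r : ℝ) (hn : 1 ≤ n) (hr : 1 ≤ r)
    (ρG ρDD : ℝ) (hρG : 0 < ρG) (hρDD : 0 < ρDD) :
    let P : ℝ → ℝ := fun x => ∑ i ∈ Finset.range (d + 1), a i * x ^ i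
    let Sc : ℝ := ρG * P (r * n) / (ρDD * r * P n)
    let α : ℝ := P (r * n) * n ^ d / (P n * (r * n) ^ d)
    0 < P n ∧ Sc = (ρG / ρDD) * α * r ^ (d - 1) ∧ (0 < α ∧ α ≤ 1) ∧
      (ρG / ρDD) * α * r ^ (d - 1) ≤ Sc :=
  stmt3_general d hd a ha had n r hn hr ρG ρDD
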